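/- Chain decomposition lemma: Fix a node i ∈ I and a simple pair (an arrow) (l,r) in a finite Hasse diagram. Every route starting (terminating) at i belongs to exactly one (l,r)-chain, where the chains are: (a) 1-chains: single routes m⃗ that either are disjoint from {l,r}, or meet {l,r} but m⃗ ∪ {l,r} is not a route from the same start; (b) 2-chains: pairs { (l, ρ⃗), (l, r, ρ⃗) } of routes starting at l = i; (c) 3-chains: triples { (ℓ⃗, l, ρ⃗), (ℓ⃗, l, r, ρ⃗), (ℓ⃗, r, ρ⃗) } with ℓ⃗ nonempty starting at i. That is, the set of routes with max node i is partitioned into these chains. -/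
import Mathlib

open Classical in
/-- A route terminating at `i`: a nonempty totally ordered set of nodes with
maximum `i` (a route is identified with its set of nodes, listed in strictly
decreasing order). -/
def RouteMax {I : Type*} [PartialOrder I] (i : I) (S : Finset I) : Prop :=
  S.Nonempty ∧ IsChain (· ≤ ·) (S : Set I) ∧ i ∈ S ∧ ∀ x ∈ S, x ≤ i

/-- The route `m⃗` meets the simple pair `{l,r}` and `m⃗ ∪ {l,r}` is again a route
terminating at `i`. -/
def Mergeable {I : Type*} [PartialOrder I] [DecidableEq I]
    (i l r : I) (S : Finset I) : Prop :=
  (l ∈ S ∨ r ∈ S) ∧ RouteMax i (S ∪ {l, r})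

open Classical in
/-- The `(l,r)`-chain containing a route `S` (routes identified with their sets of
nodes): a 1-chain `{S}` if `S` is not mergeable with `{l,r}`; a 2-chain
`{(l,ρ⃗), (l,r,ρ⃗)}` if `l = i`; a 3-chain `{(ℓ⃗,l,ρ⃗), (ℓ⃗,l,r,ρ⃗), (ℓ⃗,r,ρ⃗)}` if
`i ≻ l`. -/
noncomputable def chainOf {I : Type*} [PartialOrder I] [DecidableEq I]
    (i l r : I) (S : Finset I) : Finset (Finset I) :=
  if Mergeable i l r S then
    (if l = i then {(S ∪ {l, r}).erase r, S ∪ {l, r}}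
     else {(S ∪ {l, r}).erase r, S ∪ {l, r}, (S ∪ {l, r}).erase l})
  else {S}

section aux
set_option linter.unusedSectionVars false
variable {I : Type*} [PartialOrder I] [DecidableEq I]

lemma union_lr_self (l r : I) (U : Finset I) (hl : l ∈ U) (hr : r ∈ U) :
    U ∪ {l, r} = U := by
  ext x
  simp only [Finset.mem_union, Finset.mem_insert, Finset.mem_singleton]
  constructor
  · rintro (h | rfl | rfl) <;> assumption
  · exact Or.inl

lemma erase_union_lr (l r : I) (U : Finset I) (hl : l ∈ U) (hr : r ∈ U) :
    U.erase r ∪ {l, r} = U := by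
  ext x
  simp only [Finset.mem_union, Finset.mem_erase, Finset.mem_insert, Finset.mem_singleton]
  constructor
  · rintro (⟨_, h⟩ | rfl | rfl) <;> assumption
  · intro h
    by_cases hx : x = r
    · right; right; exact hx
    · left; exact ⟨hx, h⟩

lemma erase_union_lr' (l r : I) (U : Finset I) (hl : l ∈ U) (hr : r ∈ U) :
    U.erase l ∪ {l, r} = U := by
  ext x
  simp only [Finset.mem_union, Finset.mem_erase, Finset.mem_insert, Finset.mem_singleton]
  constructor
  · rintro (⟨_, h⟩ | rfl | rfl) <;> assumption
  · intro h
    by_cases hx : x = l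
    · right; left; exact hx
    · left; exact ⟨hx, h⟩

lemma erase_r_eq (l r : I) (S : Finset I) (hl : l ∈ S) (hr : r ∉ S) :
    (S ∪ {l, r}).erase r = S := by
  ext x
  simp only [Finset.mem_erase, Finset.mem_union, Finset.mem_insert, Finset.mem_singleton]
  constructor
  · rintro ⟨hx, h | rfl | rfl⟩
    · exact h
    · exact hl
    · exact absurd rfl hx
  · intro h; exact ⟨fun e => hr (e ▸ h), Or.inl h⟩

lemma erase_l_eq (l r : I) (S : Finset I) (hl : l ∉ S) (hr : r ∈ S) :
    (S ∪ {l, r}).erase l = S := by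
  ext x
  simp only [Finset.mem_erase, Finset.mem_union, Finset.mem_insert, Finset.mem_singleton]
  constructor
  · rintro ⟨hx, h | rfl | rfl⟩
    · exact h
    · exact absurd rfl hx
    · exact hr
  · intro h; exact ⟨fun e => hl (e ▸ h), Or.inl h⟩

lemma chainOf_congr (i l r : I) {S T : Finset I}
    (hS : Mergeable i l r S) (hT : Mergeable i l r T)
    (h : S ∪ {l, r} = T ∪ {l, r}) : chainOf i l r S = chainOf i l r T := by
  simp only [chainOf, if_pos hS, if_pos hT, h]

end aux

/-- chain decomposition lemma: for a fixed node `i` and a fixed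
simple pair (arrow) `(l,r)`, every route terminating at `i` belongs to its own
chain, and any two routes whose chains meet have equal chains; hence the
`(l,r)`-chains partition the set of routes terminating at `i`, and every route
falls into exactly one chain. -/
theorem route_chain_partition
    {I : Type*} [PartialOrder I] [DecidableEq I] [Fintype I]
    (i l r : I) (hlr : r < l) :
    (∀ S : Finset I, RouteMax i S → S ∈ chainOf i l r S) ∧
    (∀ S T : Finset I, RouteMax i S → RouteMax i T →
      S ∈ chainOf i l r T → chainOf i l r S = chainOf i l r T) := by
  have hrl : r ≠ l := ne_of_lt hlr
  constructor
  · -- membership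
    intro S hS
    by_cases hm : Mergeable i l r S
    · have hmem := hm.1
      by_cases hli : l = i
      · have hlS : l ∈ S := hli ▸ hS.2.2.1
        simp only [chainOf, if_pos hm, if_pos hli, Finset.mem_insert,
          Finset.mem_singleton]
        by_cases hrS : r ∈ S
        · right; exact (union_lr_self l r S hlS hrS).symm
        · left; exact (erase_r_eq l r S hlS hrS).symm
      · simp only [chainOf, if_pos hm, if_neg hli, Finset.mem_insert,
          Finset.mem_singleton]
        by_cases hlS : l ∈ S
        · by_cases hrS : r ∈ S
          · right; left; exact (union_lr_self l r S hlS hrS).symm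
          · left; exact (erase_r_eq l r S hlS hrS).symm
        · have hrS : r ∈ S := hmem.resolve_left hlS
          right; right; exact (erase_l_eq l r S hlS hrS).symm
    · simp [chainOf, if_neg hm]
  · -- chains coincide
    intro S T _ _ hmem
    by_cases hmT : Mergeable i l r T
    · set U : Finset I := T ∪ {l, r} with hUdef
      have hlU : l ∈ U := by simp [hUdef]
      have hrU : r ∈ U := by simp [hUdef]
      have hUU : U ∪ {l, r} = U := union_lr_self l r U hlU hrU
      have hRU : RouteMax i U := hmT.2
      have key : S ∪ {l, r} = U ∧ (l ∈ S ∨ r ∈ S) := by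
        simp only [chainOf, if_pos hmT] at hmem
        by_cases hli : l = i
        · simp only [if_pos hli, Finset.mem_insert, Finset.mem_singleton] at hmem
          rcases hmem with rfl | rfl
          · exact ⟨erase_union_lr l r U hlU hrU,
              Or.inl (Finset.mem_erase.2 ⟨hrl.symm, hlU⟩)⟩
          · exact ⟨hUU, Or.inl hlU⟩
        · simp only [if_neg hli, Finset.mem_insert, Finset.mem_singleton] at hmem
          rcases hmem with rfl | rfl | rfl
          · exact ⟨erase_union_lr l r U hlU hrU,
              Or.inl (Finset.mem_erase.2 ⟨hrl.symm, hlU⟩)⟩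
          · exact ⟨hUU, Or.inl hlU⟩
          · exact ⟨erase_union_lr' l r U hlU hrU,
              Or.inr (Finset.mem_erase.2 ⟨hrl, hrU⟩)⟩
      have hmS : Mergeable i l r S := ⟨key.2, key.1 ▸ hRU⟩
      exact chainOf_congr i l r hmS hmT key.1
    · simp only [chainOf, if_neg hmT, Finset.mem_singleton] at hmem
      subst hmem; rfl
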